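/- arXiv:math/9909155 — 2 statements merged into one kernel-verified Lean document; each statement's English description precedes it below -/
import Mathlib

section
/- Let e₁, e₂, e₃ : ℝ² → (Fin 3 → ℝ) be twice continuously differentiable vector fields of (x,y) that at every point are orthonormal (eᵢ ⬝ eⱼ = δᵢⱼ) and satisfy e₁ × e₂ = e₃, e₂ × e₃ = e₁, e₃ × e₁ = e₂, and let k, σ, τ, m₁, m₂, m₃ : ℝ² → ℝ be continuously differentiable functions such that the frame equations hold: ∂ₓe₁ = k e₂ − σ e₃, ∂ₓe₂ = −k e₁ + τ e₃, ∂ₓe₃ = σ e₁ − τ e₂, and ∂ᵧe₁ = m₃ e₂ − m₂ e₃, ∂ᵧe₂ = −m₃ e₁ + m₁ e₃, ∂ᵧe₃ = m₂ e₁ − m₁ e₂. Then at every point: ∂ᵧk − ∂ₓm₃ = e₃ ⬝ (∂ₓe₃ × ∂ᵧe₃), ∂ᵧσ − ∂ₓm₂ = e₂ ⬝ (∂ₓe₂ × ∂ᵧe₂), and ∂ᵧτ − ∂ₓm₁ = e₁ ⬝ (∂ₓe₁ × ∂ᵧe₁). -/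
open Matrix

/-- Partial derivative in the `i`-th coordinate direction of an
`ℝ³`-valued vector field on `ℝ²`. -/
noncomputable def pdv (i : Fin 2) (F : (Fin 2 → ℝ) → (Fin 3 → ℝ))
    (p : Fin 2 → ℝ) : Fin 3 → ℝ :=
  fderiv ℝ F p (Pi.single i 1)

/-- Partial derivative of a scalar function on `ℝ²`. -/
noncomputable def pd2 (i : Fin 2) (f : (Fin 2 → ℝ) → ℝ) (p : Fin 2 → ℝ) : ℝ :=
  fderiv ℝ f p (Pi.single i 1)

lemma fderiv_dot (F G : (Fin 2 → ℝ) → (Fin 3 → ℝ)) (p v : Fin 2 → ℝ)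
    (hF : DifferentiableAt ℝ F p) (hG : DifferentiableAt ℝ G p) :
    fderiv ℝ (fun q => F q ⬝ᵥ G q) p v
      = fderiv ℝ F p v ⬝ᵥ G p + F p ⬝ᵥ fderiv ℝ G p v := by
  have hFi : ∀ i, HasFDerivAt (fun q => F q i)
      ((ContinuousLinearMap.proj i).comp (fderiv ℝ F p)) p :=
    fun i => by exact (ContinuousLinearMap.proj i).hasFDerivAt.comp p hF.hasFDerivAt
  have hGi : ∀ i, HasFDerivAt (fun q => G q i)
      ((ContinuousLinearMap.proj i).comp (fderiv ℝ G p)) p :=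
    fun i => by exact (ContinuousLinearMap.proj i).hasFDerivAt.comp p hG.hasFDerivAt
  have h : HasFDerivAt (fun q => F q ⬝ᵥ G q)
      (∑ i : Fin 3, (F p i • (ContinuousLinearMap.proj i).comp (fderiv ℝ G p)
        + G p i • (ContinuousLinearMap.proj i).comp (fderiv ℝ F p))) p := by
    have : (fun q => F q ⬝ᵥ G q) = fun q => ∑ i : Fin 3, F q i * G q i := rfl
    rw [this]
    exact HasFDerivAt.fun_sum fun i _ => (hFi i).mul (hGi i)
  rw [h.fderiv]
  simp [dotProduct, Finset.sum_add_distrib, mul_comm]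
  ring

lemma mixed_pd (u w : (Fin 2 → ℝ) → (Fin 3 → ℝ))
    (hu : ContDiff ℝ 2 u) (hw : ContDiff ℝ 1 w) (p : Fin 2 → ℝ) :
    pd2 1 (fun q => pdv 0 u q ⬝ᵥ w q) p - pd2 0 (fun q => pdv 1 u q ⬝ᵥ w q) p
      = pdv 0 u p ⬝ᵥ pdv 1 w p - pdv 1 u p ⬝ᵥ pdv 0 w p := by
  have hu' : ContDiff ℝ 1 (fderiv ℝ u) := hu.fderiv_right (by norm_num)
  have hdu : ∀ i : Fin 2, DifferentiableAt ℝ (pdv i u) p := fun i => by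
    unfold pdv
    exact ((hu'.differentiable one_ne_zero) p).clm_apply (differentiableAt_const _)
  have hdw : DifferentiableAt ℝ w p := (hw.differentiable one_ne_zero) p
  have key : ∀ i j : Fin 2, fderiv ℝ (pdv j u) p (Pi.single i 1)
      = fderiv ℝ (fderiv ℝ u) p (Pi.single i 1) (Pi.single j 1) := fun i j => by
    unfold pdv
    rw [fderiv_clm_apply ((hu'.differentiable one_ne_zero) p) (differentiableAt_const _)]
    simp
  have hsym : fderiv ℝ (fderiv ℝ u) p (Pi.single 1 1) (Pi.single 0 1)
      = fderiv ℝ (fderiv ℝ u) p (Pi.single 0 1) (Pi.single 1 1) :=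
    (hu.contDiffAt.isSymmSndFDerivAt (by norm_num)) _ _
  unfold pd2
  rw [fderiv_dot _ _ _ _ (hdu 0) hdw, fderiv_dot _ _ _ _ (hdu 1) hdw,
    key 1 0, key 0 1, hsym]
  show _ + pdv 0 u p ⬝ᵥ pdv 1 w p - (_ + pdv 1 u p ⬝ᵥ pdv 0 w p) = _
  ring

/-- Geometric form of the modified M-LXII compatibility equations for an
orthonormal right-handed moving frame satisfying the modified M-LXI
equations (β = 1). -/
theorem mMLXII_geometric_form
    (e₁ e₂ e₃ : (Fin 2 → ℝ) → (Fin 3 → ℝ))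
    (he₁ : ContDiff ℝ 2 e₁) (he₂ : ContDiff ℝ 2 e₂) (he₃ : ContDiff ℝ 2 e₃)
    (hon : ∀ p, e₁ p ⬝ᵥ e₁ p = 1 ∧ e₂ p ⬝ᵥ e₂ p = 1 ∧ e₃ p ⬝ᵥ e₃ p = 1 ∧
      e₁ p ⬝ᵥ e₂ p = 0 ∧ e₁ p ⬝ᵥ e₃ p = 0 ∧ e₂ p ⬝ᵥ e₃ p = 0)
    (hc₁ : ∀ p, crossProduct (e₁ p) (e₂ p) = e₃ p)
    (hc₂ : ∀ p, crossProduct (e₂ p) (e₃ p) = e₁ p)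
    (hc₃ : ∀ p, crossProduct (e₃ p) (e₁ p) = e₂ p)
    (k σ τ m₁ m₂ m₃ : (Fin 2 → ℝ) → ℝ)
    (hk : ContDiff ℝ 1 k) (hσ : ContDiff ℝ 1 σ) (hτ : ContDiff ℝ 1 τ)
    (hm₁ : ContDiff ℝ 1 m₁) (hm₂ : ContDiff ℝ 1 m₂) (hm₃ : ContDiff ℝ 1 m₃)
    (hx₁ : ∀ p, pdv 0 e₁ p = k p • e₂ p - σ p • e₃ p)
    (hx₂ : ∀ p, pdv 0 e₂ p = -(k p) • e₁ p + τ p • e₃ p)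
    (hx₃ : ∀ p, pdv 0 e₃ p = σ p • e₁ p - τ p • e₂ p)
    (hy₁ : ∀ p, pdv 1 e₁ p = m₃ p • e₂ p - m₂ p • e₃ p)
    (hy₂ : ∀ p, pdv 1 e₂ p = -(m₃ p) • e₁ p + m₁ p • e₃ p)
    (hy₃ : ∀ p, pdv 1 e₃ p = m₂ p • e₁ p - m₁ p • e₂ p) :
    ∀ p : Fin 2 → ℝ,
      pd2 1 k p - pd2 0 m₃ p = e₃ p ⬝ᵥ crossProduct (pdv 0 e₃ p) (pdv 1 e₃ p) ∧
      pd2 1 σ p - pd2 0 m₂ p = e₂ p ⬝ᵥ crossProduct (pdv 0 e₂ p) (pdv 1 e₂ p) ∧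
      pd2 1 τ p - pd2 0 m₁ p = e₁ p ⬝ᵥ crossProduct (pdv 0 e₁ p) (pdv 1 e₁ p) := by
  intro p
  have dotlem : ∀ q, e₁ q ⬝ᵥ e₁ q = 1 ∧ e₂ q ⬝ᵥ e₂ q = 1 ∧ e₃ q ⬝ᵥ e₃ q = 1 ∧
      e₁ q ⬝ᵥ e₂ q = 0 ∧ e₁ q ⬝ᵥ e₃ q = 0 ∧ e₂ q ⬝ᵥ e₃ q = 0 ∧
      e₂ q ⬝ᵥ e₁ q = 0 ∧ e₃ q ⬝ᵥ e₁ q = 0 ∧ e₃ q ⬝ᵥ e₂ q = 0 := fun q => by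
    obtain ⟨a, b, c, d, e, f⟩ := hon q
    exact ⟨a, b, c, d, e, f, by rwa [dotProduct_comm], by rwa [dotProduct_comm],
      by rwa [dotProduct_comm]⟩
  -- scalar identifications
  have hkf : k = fun q => pdv 0 e₁ q ⬝ᵥ e₂ q := funext fun q => by
    obtain ⟨a, b, c, d, e, f, g, h, i⟩ := dotlem q
    rw [hx₁ q]; simp [sub_dotProduct, smul_dotProduct, b, i]
  have hm₃f : m₃ = fun q => pdv 1 e₁ q ⬝ᵥ e₂ q := funext fun q => by
    obtain ⟨a, b, c, d, e, f, g, h, i⟩ := dotlem q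
    rw [hy₁ q]; simp [sub_dotProduct, smul_dotProduct, b, i]
  have hσf : σ = fun q => pdv 0 e₃ q ⬝ᵥ e₁ q := funext fun q => by
    obtain ⟨a, b, c, d, e, f, g, h, i⟩ := dotlem q
    rw [hx₃ q]; simp [sub_dotProduct, smul_dotProduct, a, g]
  have hm₂f : m₂ = fun q => pdv 1 e₃ q ⬝ᵥ e₁ q := funext fun q => by
    obtain ⟨a, b, c, d, e, f, g, h, i⟩ := dotlem q
    rw [hy₃ q]; simp [sub_dotProduct, smul_dotProduct, a, g]
  have hτf : τ = fun q => pdv 0 e₂ q ⬝ᵥ e₃ q := funext fun q => by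
    obtain ⟨a, b, c, d, e, f, g, h, i⟩ := dotlem q
    rw [hx₂ q]; simp [add_dotProduct, smul_dotProduct, c, e]
  have hm₁f : m₁ = fun q => pdv 1 e₂ q ⬝ᵥ e₃ q := funext fun q => by
    obtain ⟨a, b, c, d, e, f, g, h, i⟩ := dotlem q
    rw [hy₂ q]; simp [add_dotProduct, smul_dotProduct, c, e]
  obtain ⟨a, b, c, d, e, f, g, h, i⟩ := dotlem p
  refine ⟨?_, ?_, ?_⟩
  · rw [hkf, hm₃f, mixed_pd e₁ e₂ he₁ (he₂.of_le (by norm_num)) p,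
      hx₁ p, hy₁ p, hx₂ p, hy₂ p, hx₃ p, hy₃ p]
    simp only [map_sub, map_add, LinearMap.sub_apply, LinearMap.add_apply,
      LinearMap.smul_apply, LinearMap.map_smul, _root_.map_smul, map_neg,
      LinearMap.neg_apply, cross_self, cross_anticomm (e₂ p) (e₁ p),
      cross_anticomm (e₁ p) (e₃ p), cross_anticomm (e₃ p) (e₂ p),
      hc₁ p, hc₂ p, hc₃ p,
      sub_dotProduct, add_dotProduct, dotProduct_sub, dotProduct_add,
      smul_dotProduct, dotProduct_smul, neg_dotProduct, dotProduct_neg,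
      smul_eq_mul, smul_zero, dotProduct_zero, smul_neg,
      a, b, c, d, e, f, g, h, i]
    rw [← cross_anticomm (e₁ p) (e₂ p)]
    simp only [map_neg, LinearMap.neg_apply, _root_.map_smul, hc₁ p,
      dotProduct_neg, c]
    ring
  · rw [hσf, hm₂f, mixed_pd e₃ e₁ he₃ (he₁.of_le (by norm_num)) p,
      hx₁ p, hy₁ p, hx₂ p, hy₂ p, hx₃ p, hy₃ p]
    simp only [map_sub, map_add, LinearMap.sub_apply, LinearMap.add_apply,
      LinearMap.smul_apply, LinearMap.map_smul, _root_.map_smul, map_neg,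
      LinearMap.neg_apply, cross_self, cross_anticomm (e₂ p) (e₁ p),
      cross_anticomm (e₁ p) (e₃ p), cross_anticomm (e₃ p) (e₂ p),
      hc₁ p, hc₂ p, hc₃ p,
      sub_dotProduct, add_dotProduct, dotProduct_sub, dotProduct_add,
      smul_dotProduct, dotProduct_smul, neg_dotProduct, dotProduct_neg,
      smul_eq_mul, smul_zero, dotProduct_zero, smul_neg,
      a, b, c, d, e, f, g, h, i]
    rw [← cross_anticomm (e₃ p) (e₁ p)]
    simp only [map_neg, LinearMap.neg_apply, _root_.map_smul, hc₃ p,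
      dotProduct_neg, b]
    ring
  · rw [hτf, hm₁f, mixed_pd e₂ e₃ he₂ (he₃.of_le (by norm_num)) p,
      hx₁ p, hy₁ p, hx₂ p, hy₂ p, hx₃ p, hy₃ p]
    simp only [map_sub, map_add, LinearMap.sub_apply, LinearMap.add_apply,
      LinearMap.smul_apply, LinearMap.map_smul, _root_.map_smul, map_neg,
      LinearMap.neg_apply, cross_self, cross_anticomm (e₂ p) (e₁ p),
      cross_anticomm (e₁ p) (e₃ p), cross_anticomm (e₃ p) (e₂ p),
      hc₁ p, hc₂ p, hc₃ p,
      sub_dotProduct, add_dotProduct, dotProduct_sub, dotProduct_add,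
      smul_dotProduct, dotProduct_smul, neg_dotProduct, dotProduct_neg,
      smul_eq_mul, smul_zero, dotProduct_zero, smul_neg,
      a, b, c, d, e, f, g, h, i]
    rw [← cross_anticomm (e₂ p) (e₃ p)]
    simp only [map_neg, LinearMap.neg_apply, _root_.map_smul, hc₂ p,
      dotProduct_neg, a]
    ring
end

section
/- Let c, d ∈ ℝ with c ≠ 0, and let q, p, v : ℝ³ → ℂ be smooth functions of (x,y,t). For λ ∈ ℂ define the 2×2 complex matrix-valued functions Q = ![![0, q], ![p, 0]], U(λ) = i·((cλ² + dλ)·σ₃ + (2cλ + d)·Q), B₂ = −4ic²·v·σ₃, B₁ = −4icd·v·σ₃ + 2c·σ₃·(∂ᵧQ) − 8ic²·v·Q, B₀ = (d/(2c))·B₁ − (d²/(4c²))·B₂, and V(λ) = λ²·B₂ + λ·B₁ + B₀. Then the zero-curvature condition ∂ₜU(λ) = 2(cλ² + dλ)·∂ᵧU(λ) + ∂ₓV(λ) + V(λ)·U(λ) − U(λ)·V(λ) holds identically on ℝ³ for every λ ∈ ℂ if and only if (q,p,v) satisfies the M-III_q system: i·∂ₜq = ∂ₓ∂ᵧq − 4ic·∂ₓ(v·q)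 + 2d²·v·q, −i·∂ₜp = ∂ₓ∂ᵧp + 4ic·∂ₓ(v·p) + 2d²·v·p, and ∂ₓv = ∂ᵧ(p·q). -/
open Complex

/-- Partial derivative in the `i`-th coordinate direction of a
complex-valued function on `ℝ³` (coordinates `(x, y, t)`). -/
noncomputable def pd3 (i : Fin 3) (f : (Fin 3 → ℝ) → ℂ) (p : Fin 3 → ℝ) : ℂ :=
  fderiv ℝ f p (Pi.single i 1)

/-- Entrywise partial derivative of a matrix-valued function on `ℝ³`. -/
noncomputable def mpd3 (i : Fin 3)
    (F : (Fin 3 → ℝ) → Matrix (Fin 2) (Fin 2) ℂ) (p : Fin 3 → ℝ) :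
    Matrix (Fin 2) (Fin 2) ℂ :=
  Matrix.of fun a b => pd3 i (fun q => F q a b) p

/-- The Pauli matrix σ₃. -/
def pauli3 : Matrix (Fin 2) (Fin 2) ℂ := !![1, 0; 0, -1]

/-- The potential matrix `Q = ![![0,q],![p,0]]`. -/
def Qmat (q p : (Fin 3 → ℝ) → ℂ) (pt : Fin 3 → ℝ) : Matrix (Fin 2) (Fin 2) ℂ :=
  !![0, q pt; p pt, 0]

/-- The spatial Lax operator `U(λ) = i((cλ² + dλ)σ₃ + (2cλ + d)Q)`. -/
noncomputable def Umat (c d : ℝ) (q p : (Fin 3 → ℝ) → ℂ) (lam : ℂ)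
    (pt : Fin 3 → ℝ) : Matrix (Fin 2) (Fin 2) ℂ :=
  I • (((c : ℂ) * lam ^ 2 + (d : ℂ) * lam) • pauli3 +
    (2 * (c : ℂ) * lam + (d : ℂ)) • Qmat q p pt)

/-- `B₂ = −4ic²vσ₃`. -/
noncomputable def B2mat (c : ℝ) (v : (Fin 3 → ℝ) → ℂ) (pt : Fin 3 → ℝ) :
    Matrix (Fin 2) (Fin 2) ℂ :=
  (-(4 : ℂ) * I * (c : ℂ) ^ 2 * v pt) • pauli3

/-- `B₁ = −4icdvσ₃ + 2cσ₃Q_y − 8ic²vQ`. -/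
noncomputable def B1mat (c d : ℝ) (q p v : (Fin 3 → ℝ) → ℂ)
    (pt : Fin 3 → ℝ) : Matrix (Fin 2) (Fin 2) ℂ :=
  (-(4 : ℂ) * I * (c : ℂ) * (d : ℂ) * v pt) • pauli3 +
    (2 * (c : ℂ)) • (pauli3 * mpd3 1 (Qmat q p) pt) +
    (-(8 : ℂ) * I * (c : ℂ) ^ 2 * v pt) • Qmat q p pt

/-- `B₀ = (d/2c)B₁ − (d²/4c²)B₂`. -/
noncomputable def B0mat (c d : ℝ) (q p v : (Fin 3 → ℝ) → ℂ)
    (pt : Fin 3 → ℝ) : Matrix (Fin 2) (Fin 2) ℂ :=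
  ((d : ℂ) / (2 * (c : ℂ))) • B1mat c d q p v pt -
    ((d : ℂ) ^ 2 / (4 * (c : ℂ) ^ 2)) • B2mat c v pt

/-- The temporal Lax operator `V(λ) = λ²B₂ + λB₁ + B₀`. -/
noncomputable def Vmat (c d : ℝ) (q p v : (Fin 3 → ℝ) → ℂ) (lam : ℂ)
    (pt : Fin 3 → ℝ) : Matrix (Fin 2) (Fin 2) ℂ :=
  lam ^ 2 • B2mat c v pt + lam • B1mat c d q p v pt + B0mat c d q p v pt

section Aux

lemma pd3_const' (i : Fin 3) (a : ℂ) (pt : Fin 3 → ℝ) :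
    pd3 i (fun _ => a) pt = 0 := by
  simp [pd3]

lemma pd3_add' (i : Fin 3) {f g : (Fin 3 → ℝ) → ℂ} (hf : Differentiable ℝ f)
    (hg : Differentiable ℝ g) (pt : Fin 3 → ℝ) :
    pd3 i (fun r => f r + g r) pt = pd3 i f pt + pd3 i g pt := by
  simp [pd3, fderiv_fun_add (hf pt) (hg pt)]

lemma pd3_const_mul' (i : Fin 3) (a : ℂ) {f : (Fin 3 → ℝ) → ℂ}
    (hf : Differentiable ℝ f) (pt : Fin 3 → ℝ) :
    pd3 i (fun r => a * f r) pt = a * pd3 i f pt := by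
  simp [pd3, fderiv_const_mul (hf pt) a]

lemma pd3_mul' (i : Fin 3) {f g : (Fin 3 → ℝ) → ℂ} (hf : Differentiable ℝ f)
    (hg : Differentiable ℝ g) (pt : Fin 3 → ℝ) :
    pd3 i (fun r => f r * g r) pt = pd3 i f pt * g pt + f pt * pd3 i g pt := by
  simp [pd3, fderiv_fun_mul (hf pt) (hg pt)]; ring

lemma mat2_eq_iff (A B : Matrix (Fin 2) (Fin 2) ℂ) :
    A = B ↔ (A 0 0 = B 0 0 ∧ A 0 1 = B 0 1 ∧ A 1 0 = B 1 0 ∧ A 1 1 = B 1 1) := by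
  constructor
  · rintro rfl; exact ⟨rfl, rfl, rfl, rfl⟩
  · rintro ⟨h1, h2, h3, h4⟩
    ext a b
    fin_cases a <;> fin_cases b <;> assumption

lemma Umat_apply (c d : ℝ) (q p : (Fin 3 → ℝ) → ℂ) (lam : ℂ) (pt : Fin 3 → ℝ) :
    Umat c d q p lam pt =
      !![I * ((c : ℂ) * lam ^ 2 + (d : ℂ) * lam),
         I * ((2 * (c : ℂ) * lam + d) * q pt);
         I * ((2 * (c : ℂ) * lam + d) * p pt),
         -(I * ((c : ℂ) * lam ^ 2 + (d : ℂ) * lam))] := by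
  ext a b
  fin_cases a <;> fin_cases b <;>
    simp [Umat, pauli3, Qmat, Matrix.smul_apply, Matrix.add_apply] <;> ring

lemma mpd3_U (c d : ℝ) {q p : (Fin 3 → ℝ) → ℂ} (hq : Differentiable ℝ q)
    (hp : Differentiable ℝ p) (lam : ℂ) (i : Fin 3) (pt : Fin 3 → ℝ) :
    mpd3 i (Umat c d q p lam) pt =
      !![0, I * ((2 * (c : ℂ) * lam + d) * pd3 i q pt);
         I * ((2 * (c : ℂ) * lam + d) * pd3 i p pt), 0] := by
  have e : ∀ a b, (fun r => Umat c d q p lam r a b) =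
      fun r => (!![I * ((c : ℂ) * lam ^ 2 + (d : ℂ) * lam),
         I * ((2 * (c : ℂ) * lam + d) * q r);
         I * ((2 * (c : ℂ) * lam + d) * p r),
         -(I * ((c : ℂ) * lam ^ 2 + (d : ℂ) * lam))] : Matrix (Fin 2) (Fin 2) ℂ) a b := by
    intro a b; funext r; rw [Umat_apply]
  ext a b
  fin_cases a <;> fin_cases b <;>
    simp only [mpd3, Matrix.of_apply, e] <;>
    simp only [Fin.mk_zero, Fin.mk_one, Matrix.cons_val', Matrix.cons_val_zero,
      Matrix.cons_val_one, Matrix.head_cons, Matrix.empty_val',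
      Matrix.cons_val_fin_one, Matrix.head_fin_const]
  · exact pd3_const' _ _ _
  · rw [show (fun r => I * ((2 * (c:ℂ) * lam + d) * q r)) =
        fun r => (I * (2 * (c:ℂ) * lam + d)) * q r by funext r; ring,
      pd3_const_mul' _ _ hq]; ring
  · rw [show (fun r => I * ((2 * (c:ℂ) * lam + d) * p r)) =
        fun r => (I * (2 * (c:ℂ) * lam + d)) * p r by funext r; ring,
      pd3_const_mul' _ _ hp]; ring
  · exact pd3_const' _ _ _

lemma mpd3_Q (q p : (Fin 3 → ℝ) → ℂ) (i : Fin 3) (pt : Fin 3 → ℝ) :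
    mpd3 i (Qmat q p) pt = !![0, pd3 i q pt; pd3 i p pt, 0] := by
  ext a b
  fin_cases a <;> fin_cases b <;>
    simp only [mpd3, Matrix.of_apply, Qmat] <;>
    simp only [Fin.mk_zero, Fin.mk_one, Matrix.cons_val', Matrix.cons_val_zero,
      Matrix.cons_val_one, Matrix.head_cons, Matrix.empty_val',
      Matrix.cons_val_fin_one, Matrix.head_fin_const] <;>
    first
      | exact pd3_const' _ _ _
      | rfl

lemma Vmat_apply (c d : ℝ) (hc : c ≠ 0) (q p v : (Fin 3 → ℝ) → ℂ) (lam : ℂ)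
    (pt : Fin 3 → ℝ) :
    Vmat c d q p v lam pt =
      !![(-(I * (2 * (c : ℂ) * lam + d) ^ 2)) * v pt,
         (2 * (c : ℂ) * lam + d) * pd3 1 q pt +
           (-(4 * I * (c : ℂ) * (2 * (c : ℂ) * lam + d))) * (v pt * q pt);
         (-(2 * (c : ℂ) * lam + d)) * pd3 1 p pt +
           (-(4 * I * (c : ℂ) * (2 * (c : ℂ) * lam + d))) * (v pt * p pt),
         (I * (2 * (c : ℂ) * lam + d) ^ 2) * v pt] := by
  have hc' : (c : ℂ) ≠ 0 := by exact_mod_cast hc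
  rw [Vmat, B0mat, B1mat, B2mat, mpd3_Q, pauli3, Matrix.mul_fin_two]
  ext a b
  fin_cases a <;> fin_cases b <;>
    simp only [Fin.mk_zero, Fin.mk_one, Matrix.add_apply, Matrix.sub_apply,
      Matrix.smul_apply, Matrix.cons_val', Matrix.cons_val_zero, Matrix.cons_val_one,
      Matrix.head_cons, Matrix.empty_val', Matrix.cons_val_fin_one,
      Matrix.head_fin_const, smul_eq_mul, Qmat, Matrix.of_apply] <;>
    field_simp <;> ring

lemma mpd3_0_V (c d : ℝ) (hc : c ≠ 0) {q p v : (Fin 3 → ℝ) → ℂ}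
    (hqy : Differentiable ℝ (fun r => pd3 1 q r))
    (hpy : Differentiable ℝ (fun r => pd3 1 p r))
    (hv : Differentiable ℝ v)
    (hvq : Differentiable ℝ (fun r => v r * q r))
    (hvp : Differentiable ℝ (fun r => v r * p r))
    (lam : ℂ) (pt : Fin 3 → ℝ) :
    mpd3 0 (Vmat c d q p v lam) pt =
      !![(-(I * (2 * (c : ℂ) * lam + d) ^ 2)) * pd3 0 v pt,
         (2 * (c : ℂ) * lam + d) * pd3 0 (fun r => pd3 1 q r) pt +
           (-(4 * I * (c : ℂ) * (2 * (c : ℂ) * lam + d))) * pd3 0 (fun r => v r * q r) pt;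
         (-(2 * (c : ℂ) * lam + d)) * pd3 0 (fun r => pd3 1 p r) pt +
           (-(4 * I * (c : ℂ) * (2 * (c : ℂ) * lam + d))) * pd3 0 (fun r => v r * p r) pt,
         (I * (2 * (c : ℂ) * lam + d) ^ 2) * pd3 0 v pt] := by
  have e : ∀ a b, (fun r => Vmat c d q p v lam r a b) =
      fun r => (!![(-(I * (2 * (c : ℂ) * lam + d) ^ 2)) * v r,
         (2 * (c : ℂ) * lam + d) * pd3 1 q r +
           (-(4 * I * (c : ℂ) * (2 * (c : ℂ) * lam + d))) * (v r * q r);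
         (-(2 * (c : ℂ) * lam + d)) * pd3 1 p r +
           (-(4 * I * (c : ℂ) * (2 * (c : ℂ) * lam + d))) * (v r * p r),
         (I * (2 * (c : ℂ) * lam + d) ^ 2) * v r] : Matrix (Fin 2) (Fin 2) ℂ) a b := by
    intro a b; funext r; rw [Vmat_apply c d hc]
  ext a b
  fin_cases a <;> fin_cases b <;>
    simp only [mpd3, Matrix.of_apply, e] <;>
    simp only [Fin.mk_zero, Fin.mk_one, Matrix.cons_val', Matrix.cons_val_zero,
      Matrix.cons_val_one, Matrix.head_cons, Matrix.empty_val',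
      Matrix.cons_val_fin_one, Matrix.head_fin_const]
  · exact pd3_const_mul' _ _ hv _
  · rw [pd3_add' _ (hqy.const_mul _) (hvq.const_mul _),
      pd3_const_mul' _ _ hqy, pd3_const_mul' _ _ hvq]
  · rw [pd3_add' _ (hpy.const_mul _) (hvp.const_mul _),
      pd3_const_mul' _ _ hpy, pd3_const_mul' _ _ hvp]
  · exact pd3_const_mul' _ _ hv _

end Aux

/-- The nonisospectral zero-curvature condition
`U_t = 2(cλ² + dλ)U_y + V_x + [V, U]` holds for all `λ` iff `(q, p, v)`
satisfies the M-III_q system, the L-equivalent counterpart of the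
M-III spin equation. -/
theorem MIIIq_lax_representation (c d : ℝ) (hc : c ≠ 0)
    (q p v : (Fin 3 → ℝ) → ℂ)
    (hq : ContDiff ℝ (⊤ : ℕ∞) q) (hp : ContDiff ℝ (⊤ : ℕ∞) p) (hv : ContDiff ℝ (⊤ : ℕ∞) v) :
    (∀ lam : ℂ, ∀ pt : Fin 3 → ℝ,
      mpd3 2 (Umat c d q p lam) pt =
        (2 * ((c : ℂ) * lam ^ 2 + (d : ℂ) * lam)) • mpd3 1 (Umat c d q p lam) pt +
        mpd3 0 (Vmat c d q p v lam) pt +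
        Vmat c d q p v lam pt * Umat c d q p lam pt -
        Umat c d q p lam pt * Vmat c d q p v lam pt) ↔
    (∀ pt : Fin 3 → ℝ,
      (I * pd3 2 q pt = pd3 0 (fun r => pd3 1 q r) pt -
        4 * I * (c : ℂ) * pd3 0 (fun r => v r * q r) pt +
        2 * (d : ℂ) ^ 2 * v pt * q pt) ∧
      (-I * pd3 2 p pt = pd3 0 (fun r => pd3 1 p r) pt +
        4 * I * (c : ℂ) * pd3 0 (fun r => v r * p r) pt +
        2 * (d : ℂ) ^ 2 * v pt * p pt) ∧
      pd3 0 v pt = pd3 1 (fun r => p r * q r) pt) := by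
  have hc' : (c : ℂ) ≠ 0 := by exact_mod_cast hc
  have hq' : Differentiable ℝ q := hq.differentiable (by simp)
  have hp' : Differentiable ℝ p := hp.differentiable (by simp)
  have hv' : Differentiable ℝ v := hv.differentiable (by simp)
  have hqy : Differentiable ℝ (fun r => pd3 1 q r) :=
    ((hq.fderiv_right (m := 1) (by norm_cast)).clm_apply contDiff_const).differentiable one_ne_zero
  have hpy : Differentiable ℝ (fun r => pd3 1 p r) :=
    ((hp.fderiv_right (m := 1) (by norm_cast)).clm_apply contDiff_const).differentiable one_ne_zero
  have hvq : Differentiable ℝ (fun r => v r * q r) := hv'.mul hq'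
  have hvp : Differentiable ℝ (fun r => v r * p r) := hv'.mul hp'
  -- closed form of the zero-curvature condition at a fixed (lam, pt)
  have key : ∀ lam : ℂ, ∀ pt : Fin 3 → ℝ,
      (mpd3 2 (Umat c d q p lam) pt =
        (2 * ((c : ℂ) * lam ^ 2 + (d : ℂ) * lam)) • mpd3 1 (Umat c d q p lam) pt +
        mpd3 0 (Vmat c d q p v lam) pt +
        Vmat c d q p v lam pt * Umat c d q p lam pt -
        Umat c d q p lam pt * Vmat c d q p v lam pt) ↔
      ((2 * (c : ℂ) * lam + d) ^ 2 *
          (pd3 1 p pt * q pt + p pt * pd3 1 q pt - pd3 0 v pt) = 0 ∧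
        (2 * (c : ℂ) * lam + d) *
          ((pd3 0 (fun r => pd3 1 q r) pt -
            4 * I * (c : ℂ) * pd3 0 (fun r => v r * q r) pt +
            2 * (d : ℂ) ^ 2 * v pt * q pt) - I * pd3 2 q pt) = 0 ∧
        (2 * (c : ℂ) * lam + d) *
          ((pd3 0 (fun r => pd3 1 p r) pt +
            4 * I * (c : ℂ) * pd3 0 (fun r => v r * p r) pt +
            2 * (d : ℂ) ^ 2 * v pt * p pt) + I * pd3 2 p pt) = 0) := by
    intro lam pt
    rw [mpd3_U c d hq' hp' lam 2 pt, mpd3_U c d hq' hp' lam 1 pt,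
      mpd3_0_V c d hc hqy hpy hv' hvq hvp lam pt,
      Vmat_apply c d hc q p v lam pt, Umat_apply c d q p lam pt,
      Matrix.mul_fin_two, Matrix.mul_fin_two, mat2_eq_iff]
    simp only [Matrix.add_apply, Matrix.sub_apply, Matrix.smul_apply,
      Matrix.of_apply, Matrix.cons_val', Matrix.cons_val_zero, Matrix.cons_val_one,
      Matrix.head_cons, Matrix.empty_val', Matrix.cons_val_fin_one,
      Matrix.head_fin_const, smul_eq_mul]
    constructor
    · rintro ⟨h00, h01, h10, -⟩
      refine ⟨?_, ?_, ?_⟩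
      · linear_combination I * h00 +
          ((2 * (c : ℂ) * lam + d) ^ 2 *
            (pd3 1 p pt * q pt + p pt * pd3 1 q pt - pd3 0 v pt)) * Complex.I_sq
      · linear_combination (-1 : ℂ) * h01 +
          (2 * (d : ℂ) ^ 2 * (2 * (c : ℂ) * lam + d) * q pt * v pt) * Complex.I_sq
      · linear_combination h10 +
          (2 * (d : ℂ) ^ 2 * (2 * (c : ℂ) * lam + d) * p pt * v pt) * Complex.I_sq
    · rintro ⟨t1, t2, t3⟩
      refine ⟨?_, ?_, ?_, ?_⟩
      · linear_combination (-I) * t1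
      · linear_combination (-1 : ℂ) * t2 +
          (2 * (d : ℂ) ^ 2 * (2 * (c : ℂ) * lam + d) * q pt * v pt) * Complex.I_sq
      · linear_combination t3 -
          (2 * (d : ℂ) ^ 2 * (2 * (c : ℂ) * lam + d) * p pt * v pt) * Complex.I_sq
      · linear_combination I * t1
  constructor
  · intro h pt
    set lam0 : ℂ := (1 - (d : ℂ)) / (2 * (c : ℂ)) with hlam0
    have ht : 2 * (c : ℂ) * lam0 + d = 1 := by
      rw [hlam0]; field_simp; ring
    obtain ⟨t1, t2, t3⟩ := (key lam0 pt).mp (h lam0 pt)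
    rw [ht] at t1 t2 t3
    rw [one_pow, one_mul] at t1
    rw [one_mul] at t2 t3
    refine ⟨?_, ?_, ?_⟩
    · linear_combination -t2
    · linear_combination -t3
    · rw [pd3_mul' 1 hp' hq' pt]
      linear_combination -t1
  · intro h lam pt
    obtain ⟨h1, h2, h3⟩ := h pt
    rw [pd3_mul' 1 hp' hq' pt] at h3
    rw [key lam pt]
    refine ⟨?_, ?_, ?_⟩
    · linear_combination (-(2 * (c : ℂ) * lam + d) ^ 2) * h3
    · linear_combination (-(2 * (c : ℂ) * lam + d)) * h1
    · linear_combination (-(2 * (c : ℂ) * lam + d)) * h2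
end
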